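/- Let X₁ be the disjoint union of a single vertex and the path P₃ on three vertices, and let X₂ be the disjoint union of two copies of the single-edge graph P₂. Then for every finite simple graph G with at least one vertex, the number of homomorphisms from G to X₁ equals the number of homomorphisms from G to X₂ if and only if either G is not 2-colorable, or G is a disjoint union of isolated vertices and single edges (i.e., G is isomorphic to the disjoint union of m isolated vertices and n copies of P₂ for some m, n ≥ 0 with m + n ≥ 1). -/

import Mathlib

open SimpleGraph

/-- The disjoint union of two simple graphs. -/
def disjUnion {α β : Type*} (G : SimpleGraph α) (H : SimpleGraph β) : SimpleGraph (α ⊕ β) :=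
  SimpleGraph.fromRel fun x y =>
    (∃ a b, G.Adj a b ∧ x = Sum.inl a ∧ y = Sum.inl b) ∨
    (∃ a b, H.Adj a b ∧ x = Sum.inr a ∧ y = Sum.inr b)

/-- `X₁`: the disjoint union of a single vertex and the path `P₃` on three vertices. -/
def X₁ : SimpleGraph (Fin 1 ⊕ Fin 3) := disjUnion (⊥ : SimpleGraph (Fin 1)) (pathGraph 3)

/-- `X₂`: the disjoint union of two copies of the single-edge graph `P₂`. -/
def X₂ : SimpleGraph (Fin 2 ⊕ Fin 2) := disjUnion (pathGraph 2) (pathGraph 2)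

/-- The disjoint union of `m` isolated vertices and `n` copies of the single-edge graph `P₂`. -/
def vertsPlusEdges (m n : ℕ) : SimpleGraph (Fin m ⊕ Fin n × Fin 2) :=
  SimpleGraph.fromRel fun x y => ∃ i : Fin n, x = Sum.inr (i, 0) ∧ y = Sum.inr (i, 1)

/-! ### Auxiliary material -/

instance (n : ℕ) : DecidableRel (pathGraph n).Adj := fun _ _ =>
  decidable_of_iff _ pathGraph_adj.symm

instance {α β : Type*} (G : SimpleGraph α) (H : SimpleGraph β)
    [DecidableEq α] [DecidableEq β] [Fintype α] [Fintype β]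
    [DecidableRel G.Adj] [DecidableRel H.Adj] : DecidableRel (disjUnion G H).Adj := fun x y =>
  decidable_of_iff _ (SimpleGraph.fromRel_adj _ x y).symm

instance : DecidableRel X₁.Adj := by unfold X₁; infer_instance
instance : DecidableRel X₂.Adj := by unfold X₂; infer_instance

def phi : Fin 2 ⊕ Fin 2 → Fin 1 ⊕ Fin 3
  | Sum.inl i => Sum.inr (if i = 0 then 0 else 1)
  | Sum.inr i => Sum.inr (if i = 0 then 2 else 1)

def psi : Fin 2 ⊕ Fin 2 → Fin 1 ⊕ Fin 3
  | Sum.inl i => Sum.inr (if i = 0 then 0 else 1)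
  | Sum.inr i => if i = 0 then Sum.inr 2 else Sum.inl 0

lemma phi_hom : ∀ p q, X₂.Adj p q → X₁.Adj (phi p) (phi q) := by decide
lemma psi_inj : Function.Injective psi := by decide
lemma phi_key : ∀ p q p' q', X₂.Adj p q → X₂.Adj p' q' → phi p = phi p' → phi q = phi q' →
    p = p' := by decide

lemma X2_adj_inr0 : ∀ p, X₂.Adj p (Sum.inr 0) → p = Sum.inr 1 := by decide
lemma X2_not_adj : ¬ X₂.Adj (Sum.inr 1) (Sum.inl 0) := by decide
lemma phi_eq_b : ∀ p, phi p = Sum.inr 1 → p = Sum.inl 1 ∨ p = Sum.inr 1 := by decide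
lemma phi_eq_c : ∀ p, phi p = Sum.inr 2 → p = Sum.inr 0 := by decide
lemma phi_eq_a : ∀ p, phi p = Sum.inr 0 → p = Sum.inl 0 := by decide

def colX₁ : X₁.Coloring (Fin 2) :=
  Coloring.mk (fun x => match x with
    | Sum.inl _ => 0
    | Sum.inr j => if j = 1 then 1 else 0) (by decide)

def colX₂ : X₂.Coloring (Fin 2) :=
  Coloring.mk (fun x => match x with
    | Sum.inl j => j
    | Sum.inr j => j) (by decide)

lemma X1_adj_ba : X₁.Adj (Sum.inr 1) (Sum.inr 0) := by decide
lemma X1_adj_ab : X₁.Adj (Sum.inr 0) (Sum.inr 1) := by decide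
lemma X1_adj_cb : X₁.Adj (Sum.inr 2) (Sum.inr 1) := by decide
lemma X1_adj_bc : X₁.Adj (Sum.inr 1) (Sum.inr 2) := by decide

/-! ### vertsPlusEdges adjacency -/

lemma vPE_adj {m n : ℕ} {a b : Fin m ⊕ Fin n × Fin 2} (h : (vertsPlusEdges m n).Adj a b) :
    ∃ i : Fin n, (a = Sum.inr (i, 0) ∧ b = Sum.inr (i, 1)) ∨
      (a = Sum.inr (i, 1) ∧ b = Sum.inr (i, 0)) := by
  rw [vertsPlusEdges, SimpleGraph.fromRel_adj] at h
  obtain ⟨-, ⟨i, h1, h2⟩ | ⟨i, h1, h2⟩⟩ := h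
  · exact ⟨i, Or.inl ⟨h1, h2⟩⟩
  · exact ⟨i, Or.inr ⟨h2, h1⟩⟩

lemma vPE_adj_inr {m n : ℕ} {i j : Fin n} {a b : Fin 2} :
    (vertsPlusEdges m n).Adj (Sum.inr (i, a)) (Sum.inr (j, b)) ↔ i = j ∧ a ≠ b := by
  rw [vertsPlusEdges, SimpleGraph.fromRel_adj]
  constructor
  · rintro ⟨hne, ⟨l, h1, h2⟩ | ⟨l, h1, h2⟩⟩ <;>
    · simp only [Sum.inr.injEq, Prod.mk.injEq] at h1 h2
      refine ⟨by aesop, ?_⟩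
      rw [h1.2, h2.2]; decide
  · rintro ⟨rfl, hab⟩
    refine ⟨by simp [hab], ?_⟩
    fin_cases a <;> fin_cases b <;> simp_all

lemma vPE_adj_unique {m n : ℕ} {a b c : Fin m ⊕ Fin n × Fin 2}
    (h1 : (vertsPlusEdges m n).Adj a b) (h2 : (vertsPlusEdges m n).Adj a c) : b = c := by
  obtain ⟨i, hi⟩ := vPE_adj h1
  obtain ⟨j, hj⟩ := vPE_adj h2
  rcases hi with ⟨rfl, rfl⟩ | ⟨rfl, rfl⟩ <;> rcases hj with ⟨ha, rfl⟩ | ⟨ha, rfl⟩ <;>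
    simp_all

lemma vPE_adj_inl {m n : ℕ} {i : Fin m} {b : Fin m ⊕ Fin n × Fin 2} :
    ¬ (vertsPlusEdges m n).Adj (Sum.inl i) b := by
  intro h
  obtain ⟨j, ⟨h1, -⟩ | ⟨h1, -⟩⟩ := vPE_adj h <;> exact absurd h1 (by simp)

/-- Homomorphisms out of `vertsPlusEdges`. -/
def vpeHomEquiv (m n : ℕ) {W : Type*} (X : SimpleGraph W) :
    (vertsPlusEdges m n →g X) ≃ ((Fin m → W) × (Fin n → {p : W × W // X.Adj p.1 p.2})) where
  toFun f := ⟨fun i => f (Sum.inl i),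
    fun i => ⟨(f (Sum.inr (i, 0)), f (Sum.inr (i, 1))),
      f.map_adj (vPE_adj_inr.2 ⟨rfl, by decide⟩)⟩⟩
  invFun gh := ⟨fun x => match x with
      | Sum.inl i => gh.1 i
      | Sum.inr (i, j) => if j = 0 then (gh.2 i).1.1 else (gh.2 i).1.2, by
    intro a b hab
    obtain ⟨i, ⟨rfl, rfl⟩ | ⟨rfl, rfl⟩⟩ := vPE_adj hab
    · simpa using (gh.2 i).2
    · simpa using (gh.2 i).2.symm⟩
  left_inv f := by
    ext x
    rcases x with i | ⟨i, j⟩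
    · rfl
    · fin_cases j <;> rfl
  right_inv gh := by
    refine Prod.ext rfl (funext fun i => Subtype.ext (Prod.ext rfl rfl))

lemma card_hom_vpe {W : Type*} [Fintype W] (X : SimpleGraph W) (m n : ℕ) :
    Nat.card (vertsPlusEdges m n →g X) =
      (Nat.card W) ^ m * (Nat.card {p : W × W // X.Adj p.1 p.2}) ^ n := by
  rw [Nat.card_congr (vpeHomEquiv m n X), Nat.card_prod, Nat.card_fun, Nat.card_fun]
  simp [Nat.card_eq_fintype_card]

/-- Composition with an isomorphism on the source. -/
def homCongr {α β γ : Type*} {G : SimpleGraph α} {H : SimpleGraph β} (e : G ≃g H)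
    (X : SimpleGraph γ) : (G →g X) ≃ (H →g X) where
  toFun f := f.comp e.symm.toHom
  invFun g := g.comp e.toHom
  left_inv f := by
    ext v
    exact congrArg f (e.symm_apply_apply v)
  right_inv g := by
    ext v
    exact congrArg g (e.apply_symm_apply v)

/-! ### The isomorphism for graphs of maximum degree at most one -/

lemma exists_iso_of_deg_le_one {k : ℕ} (G : SimpleGraph (Fin k))
    (h : ∀ ⦃v w w'⦄, G.Adj v w → G.Adj v w' → w = w') :
    ∃ m n : ℕ, Nonempty (G ≃g vertsPlusEdges m n) := by
  classical
  let p : Fin k → Prop := fun v => ∃ w, G.Adj v w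
  let M := {v : Fin k // p v}
  let ν : M → M := fun v => ⟨v.2.choose, v.1, v.2.choose_spec.symm⟩
  have hν : ∀ v : M, G.Adj v.1 (ν v).1 := fun v => v.2.choose_spec
  have hνν : ∀ v : M, ν (ν v) = v := fun v => Subtype.ext (h (hν (ν v)) (hν v).symm)
  have hνne : ∀ v : M, ν v ≠ v := fun v hv => G.loopless.irrefl v.1 (by
    have := hν v; rw [hv] at this; exact this)
  have adj_iff : ∀ v w : M, G.Adj v.1 w.1 ↔ w = ν v := by
    intro v w
    constructor
    · intro hvw; exact Subtype.ext (h hvw (hν v))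
    · rintro rfl; exact hν v
  let Q := {v : M // v < ν v}
  have hlt : ∀ v : M, ¬ v < ν v → ν v < ν (ν v) := by
    intro v hv
    rw [hνν]
    exact lt_of_le_of_ne (not_lt.mp hv) (hνne v)
  let eM : M ≃ Q × Fin 2 :=
    { toFun := fun v => if hv : v < ν v then (⟨v, hv⟩, 0) else (⟨ν v, hlt v hv⟩, 1)
      invFun := fun qj => if qj.2 = 0 then qj.1.1 else ν qj.1.1
      left_inv := by
        intro v
        by_cases hv : v < ν v
        · simp [hv]
        · simp [hv, hνν]
      right_inv := by
        rintro ⟨⟨q, hq⟩, j⟩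
        fin_cases j
        · simp [hq]
        · have h2 : ¬ ν q < q := not_lt.mpr hq.le
          simp [hνν, h2] }
  have eM_app_pos : ∀ (v : M) (hv : v < ν v), eM v = (⟨v, hv⟩, 0) := fun v hv => dif_pos hv
  have eM_app_neg : ∀ (v : M) (hv : ¬ v < ν v), eM v = (⟨ν v, hlt v hv⟩, 1) :=
    fun v hv => dif_neg hv
  have h01 : (0 : Fin 2) ≠ 1 := by decide
  have h10 : (1 : Fin 2) ≠ 0 := by decide
  have eM_key : ∀ v w : M, ((eM v).1 = (eM w).1 ∧ (eM v).2 ≠ (eM w).2) ↔ w = ν v := by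
    intro v w
    by_cases hv : v < ν v <;> by_cases hw : w < ν w
    · rw [eM_app_pos v hv, eM_app_pos w hw]
      constructor
      · rintro ⟨-, h0⟩; exact absurd rfl h0
      · rintro rfl
        rw [hνν] at hw
        exact absurd (hv.trans hw) (lt_irrefl _)
    · rw [eM_app_pos v hv, eM_app_neg w hw]
      constructor
      · rintro ⟨h1, -⟩
        have h2 : (v : M) = ν w := congrArg Subtype.val h1
        have h3 := congrArg ν h2
        rw [hνν] at h3
        exact h3.symm
      · rintro rfl
        exact ⟨Subtype.ext (hνν v).symm, h01⟩
    · rw [eM_app_neg v hv, eM_app_pos w hw]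
      constructor
      · rintro ⟨h1, -⟩
        exact (congrArg Subtype.val h1).symm
      · rintro rfl
        exact ⟨Subtype.ext rfl, h10⟩
    · rw [eM_app_neg v hv, eM_app_neg w hw]
      constructor
      · rintro ⟨-, h0⟩; exact absurd rfl h0
      · rintro rfl
        rw [hνν] at hw
        exact absurd (le_antisymm (not_lt.mp hv) (not_lt.mp hw)) (hνne v)
  let I := {v : Fin k // ¬ p v}
  let eI : I ≃ Fin (Fintype.card I) := Fintype.equivFin I
  let eQ : Q ≃ Fin (Fintype.card Q) := Fintype.equivFin Q
  let e : Fin k ≃ (Fin (Fintype.card I) ⊕ Fin (Fintype.card Q) × Fin 2) :=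
    ((Equiv.sumCompl p).symm.trans (Equiv.sumComm M I)).trans
      (Equiv.sumCongr eI (eM.trans (Equiv.prodCongr eQ (Equiv.refl (Fin 2)))))
  have e_app_pos : ∀ (x : Fin k) (hx : p x),
      e x = Sum.inr (eQ (eM ⟨x, hx⟩).1, (eM ⟨x, hx⟩).2) := by
    intro x hx
    simp only [e, Equiv.trans_apply, Equiv.sumCompl_symm_apply_of_pos hx,
      Equiv.sumComm_apply, Sum.swap_inl, Equiv.sumCongr_apply, Sum.map_inr,
      Equiv.prodCongr_apply, Prod.map, Equiv.refl_apply]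
  have e_app_neg : ∀ (x : Fin k) (hx : ¬ p x), e x = Sum.inl (eI ⟨x, hx⟩) := by
    intro x hx
    simp only [e, Equiv.trans_apply, Equiv.sumCompl_symm_apply_of_neg hx,
      Equiv.sumComm_apply, Sum.swap_inr, Equiv.sumCongr_apply, Sum.map_inl]
  refine ⟨Fintype.card I, Fintype.card Q, ⟨⟨e, ?_⟩⟩⟩
  intro a b
  by_cases pa : p a
  · by_cases pb : p b
    · rw [e_app_pos a pa, e_app_pos b pb, vPE_adj_inr, Equiv.apply_eq_iff_eq]
      exact (eM_key ⟨a, pa⟩ ⟨b, pb⟩).trans (adj_iff ⟨a, pa⟩ ⟨b, pb⟩).symm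
    · rw [e_app_pos a pa, e_app_neg b pb]
      exact iff_of_false (fun hadj => vPE_adj_inl hadj.symm) (fun hab => pb ⟨a, hab.symm⟩)
  · rw [e_app_neg a pa]
    exact iff_of_false vPE_adj_inl (fun hab => pa ⟨b, hab⟩)

/-! ### Main theorem -/

/-- For every finite simple graph `G` with at least one vertex, `hom(G, X₁) = hom(G, X₂)` holds if
and only if either `G` is not 2-colorable, or `G` is a disjoint union of isolated vertices and
single edges. -/
theorem hom_into_X1_eq_hom_into_X2_iff {k : ℕ} (hk : 1 ≤ k) (G : SimpleGraph (Fin k)) :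
    Nat.card (G →g X₁) = Nat.card (G →g X₂) ↔
      (¬ G.Colorable 2 ∨
        ∃ m n : ℕ, 1 ≤ m + n ∧ Nonempty (G ≃g vertsPlusEdges m n)) := by
  classical
  have c1 : Nat.card {p : (Fin 1 ⊕ Fin 3) × (Fin 1 ⊕ Fin 3) // X₁.Adj p.1 p.2} = 4 := by
    rw [Nat.card_eq_fintype_card]; decide
  have c2 : Nat.card {p : (Fin 2 ⊕ Fin 2) × (Fin 2 ⊕ Fin 2) // X₂.Adj p.1 p.2} = 4 := by
    rw [Nat.card_eq_fintype_card]; decide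
  have cv1 : Nat.card (Fin 1 ⊕ Fin 3) = 4 := by simp [Nat.card_eq_fintype_card]
  have cv2 : Nat.card (Fin 2 ⊕ Fin 2) = 4 := by simp [Nat.card_eq_fintype_card]
  by_cases hdeg : ∀ ⦃v w w'⦄, G.Adj v w → G.Adj v w' → w = w'
  · -- max degree at most 1: both sides hold
    obtain ⟨m, n, ⟨e⟩⟩ := exists_iso_of_deg_le_one G hdeg
    have hmn : 1 ≤ m + n := by
      by_contra hmn
      have hm : m = 0 := by omega
      have hn : n = 0 := by omega
      subst hm; subst hn
      rcases e.toEquiv ⟨0, hk⟩ with a | ⟨b, -⟩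
      · exact a.elim0
      · exact b.elim0
    refine iff_of_true ?_ (Or.inr ⟨m, n, hmn, ⟨e⟩⟩)
    calc Nat.card (G →g X₁) = Nat.card (vertsPlusEdges m n →g X₁) :=
          Nat.card_congr (homCongr e X₁)
      _ = 4 ^ m * 4 ^ n := by rw [card_hom_vpe, c1, cv1]
      _ = Nat.card (vertsPlusEdges m n →g X₂) := by rw [card_hom_vpe, c2, cv2]
      _ = Nat.card (G →g X₂) := (Nat.card_congr (homCongr e X₂)).symm
  · push_neg at hdeg
    obtain ⟨v, u, w, hvu, hvw, huw⟩ := hdeg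
    by_cases hcol : G.Colorable 2
    · -- both sides fail
      refine iff_of_false ?_ ?_
      · intro hcard
        -- the injection Φ
        let Φfun : (G →g X₂) → Fin k → (Fin 1 ⊕ Fin 3) := fun f x =>
          if _ : (∃ y, G.Adj x y) then phi (f x) else psi (f x)
        let Φ : (G →g X₂) → (G →g X₁) := fun f =>
          { toFun := Φfun f
            map_rel' := by
              intro a b hab
              have ha : ∃ y, G.Adj a y := ⟨b, hab⟩
              have hb : ∃ y, G.Adj b y := ⟨a, hab.symm⟩
              simp only [Φfun]
              rw [dif_pos ha, dif_pos hb]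
              exact phi_hom _ _ (f.map_adj hab) }
        have Φapp_pos : ∀ (f : G →g X₂) (x : Fin k) (hx : ∃ y, G.Adj x y),
            Φ f x = phi (f x) := fun f x hx => dif_pos hx
        have Φapp_neg : ∀ (f : G →g X₂) (x : Fin k) (hx : ¬ ∃ y, G.Adj x y),
            Φ f x = psi (f x) := fun f x hx => dif_neg hx
        have Φinj : Function.Injective Φ := by
          intro f f' hff
          ext x
          by_cases hx : ∃ y, G.Adj x y
          · obtain ⟨y, hy⟩ := hx
            have hxx := congrFun (congrArg DFunLike.coe hff) x
            have hyy := congrFun (congrArg DFunLike.coe hff) y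
            rw [Φapp_pos f x ⟨y, hy⟩, Φapp_pos f' x ⟨y, hy⟩] at hxx
            rw [Φapp_pos f y ⟨x, hy.symm⟩, Φapp_pos f' y ⟨x, hy.symm⟩] at hyy
            exact phi_key _ _ _ _ (f.map_adj hy) (f'.map_adj hy) hxx hyy
          · have hxx := congrFun (congrArg DFunLike.coe hff) x
            rw [Φapp_neg f x hx, Φapp_neg f' x hx] at hxx
            exact psi_inj hxx
        have hfin1 : Finite (G →g X₁) := Finite.of_injective _ DFunLike.coe_injective
        have hfin2 : Finite (G →g X₂) := Finite.of_injective _ DFunLike.coe_injective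
        have Φbij : Function.Bijective Φ :=
          (Nat.bijective_iff_injective_and_card Φ).mpr ⟨Φinj, hcard.symm⟩
        -- construct a homomorphism not in the range of Φ
        obtain ⟨c⟩ := hcol
        have fin2aux : ∀ i j l : Fin 2, i ≠ l → j ≠ l → i = j := by decide
        let hfun : Fin k → (Fin 1 ⊕ Fin 3) := fun x =>
          if x = u then Sum.inr 2 else if c x = c v then Sum.inr 1 else Sum.inr 0
        let hh : G →g X₁ :=
          { toFun := hfun
            map_rel' := by
              intro a b hab
              simp only [hfun]
              by_cases hau : a = u
              · have hbu : ¬ b = u := fun hbu => G.loopless.irrefl u (by rw [hau, hbu] at hab; exact hab)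
                have hcb : c b = c v := fin2aux (c b) (c v) (c u)
                  (by rw [← hau]; exact (c.valid hab).symm) (c.valid hvu)
                rw [if_pos hau, if_neg hbu, if_pos hcb]
                exact X1_adj_cb
              · by_cases hbu : b = u
                · have hca : c a = c v := fin2aux (c a) (c v) (c u)
                    (by rw [← hbu]; exact c.valid hab) (c.valid hvu)
                  rw [if_neg hau, if_pos hbu, if_pos hca]
                  exact X1_adj_bc
                · rw [if_neg hau, if_neg hbu]
                  by_cases hca : c a = c v
                  · have hcb : ¬ c b = c v := fun hcb => c.valid hab (hca.trans hcb.symm)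
                    rw [if_pos hca, if_neg hcb]
                    exact X1_adj_ba
                  · have hcb : c b = c v := fin2aux (c b) (c v) (c a)
                      (c.valid hab).symm (fun h => hca h.symm)
                    rw [if_neg hca, if_pos hcb]
                    exact X1_adj_ab }
        obtain ⟨f, hf⟩ := Φbij.2 hh
        have hvne : v ≠ u := G.ne_of_adj hvu
        have hwne : w ≠ u := fun h => huw h.symm
        have hhv : hh v = Sum.inr 1 := by
          show hfun v = _
          simp [hfun, hvne]
        have hhu : hh u = Sum.inr 2 := by
          show hfun u = _
          simp [hfun]
        have hhw : hh w = Sum.inr 0 := by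
          show hfun w = _
          have hcw : ¬ c w = c v := fun hcw => c.valid hvw hcw.symm
          simp [hfun, hwne, hcw]
        have hfv : phi (f v) = Sum.inr 1 := by
          have h := congrFun (congrArg DFunLike.coe hf) v
          rw [Φapp_pos f v ⟨u, hvu⟩] at h
          exact h.trans hhv
        have hfu : phi (f u) = Sum.inr 2 := by
          have h := congrFun (congrArg DFunLike.coe hf) u
          rw [Φapp_pos f u ⟨v, hvu.symm⟩] at h
          exact h.trans hhu
        have hfw : phi (f w) = Sum.inr 0 := by
          have h := congrFun (congrArg DFunLike.coe hf) w
          rw [Φapp_pos f w ⟨v, hvw.symm⟩] at h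
          exact h.trans hhw
        have hfu' : f u = Sum.inr 0 := phi_eq_c _ hfu
        have hfv' : f v = Sum.inr 1 := X2_adj_inr0 (f v) (hfu' ▸ f.map_adj hvu)
        have hfw' : f w = Sum.inl 0 := phi_eq_a _ hfw
        have hbad : X₂.Adj (Sum.inr 1) (Sum.inl 0) := hfv' ▸ hfw' ▸ f.map_adj hvw
        exact X2_not_adj hbad
      · rintro (h | ⟨m, n, -, ⟨e⟩⟩)
        · exact h hcol
        · have h1 : (vertsPlusEdges m n).Adj (e v) (e u) := e.map_rel_iff.mpr hvu
          have h2 : (vertsPlusEdges m n).Adj (e v) (e w) := e.map_rel_iff.mpr hvw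
          exact huw (e.toEquiv.injective (vPE_adj_unique h1 h2))
    · -- not 2-colorable: both hom sets are empty
      have he1 : IsEmpty (G →g X₁) := ⟨fun f => hcol ⟨colX₁.comp f⟩⟩
      have he2 : IsEmpty (G →g X₂) := ⟨fun f => hcol ⟨colX₂.comp f⟩⟩
      refine iff_of_true ?_ (Or.inl hcol)
      rw [Nat.card_of_isEmpty, Nat.card_of_isEmpty]
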